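/- Assume (1+θ)·∫_{(0,∞)} z dμ_F̂(z) < ∞ and that the topological support of μ_F equals [0,∞). Then for every a > 0 the minimizer of J_a over 𝒜 is unique: if H₁, H₂ ∈ 𝒜 satisfy J_a(H₁) = J_a(H₂) = v(a), then H₁(z) = H₂(z) for all z ≥ 0. -/

import Mathlib

open MeasureTheory Set Filter Topology
open scoped ENNReal

noncomputable section

/-- The admissible set 𝒜: functions `H : [0,∞) → [0,∞)` with `H 0 = 0` that are
nondecreasing and 1-Lipschitz (extended to `ℝ`, with the conditions imposed on `[0,∞)`). -/
def Adm : Set (ℝ → ℝ) :=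
  {H | H 0 = 0 ∧ (∀ z, 0 ≤ z → 0 ≤ H z) ∧ MonotoneOn H (Set.Ici 0) ∧
    LipschitzOnWith 1 H (Set.Ici 0)}

/-- The objective functional
`J_a(H) = ∫_{(0,∞)} ((a/2)·H² + H) dμ_F − (1+θ)·∫_{(0,∞)} H dμ_F̂`, valued in `EReal`. -/
def Jfun (μF μFhat : Measure ℝ) (θ a : ℝ) (H : ℝ → ℝ) : EReal :=
  ((∫⁻ z in Set.Ioi (0:ℝ), ENNReal.ofReal (a / 2 * H z ^ 2 + H z) ∂μF : ℝ≥0∞) : EReal)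
    - ((ENNReal.ofReal (1 + θ) * ∫⁻ z in Set.Ioi (0:ℝ), ENNReal.ofReal (H z) ∂μFhat : ℝ≥0∞) : EReal)

/-- `v(a) = inf_{H ∈ 𝒜} J_a(H)`. -/
def vfun (μF μFhat : Measure ℝ) (θ : ℝ) (a : ℝ) : EReal :=
  ⨅ H ∈ Adm, Jfun μF μFhat θ a H

/-! Since `h ↦ (a/2)·h² + h` is strictly convex and the second term of `J` is linear in `H`, two
minimizers `H₁, H₂` and their (admissible) midpoint `M` satisfy
`J(H₁) + J(H₂) = 2·J(M) + ∫ (a/4)(H₁ - H₂)² dμ_F`. Minimality gives `J(H₁), J(H₂) ≤ J(M)`, so the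
last integral vanishes and `H₁ = H₂` μ_F-a.e. on `(0,∞)`. The set where two continuous functions
differ is open, hence empty because every open set meeting `[0,∞)` has positive μ_F-measure.
The bound `H z ≤ z` and the finiteness of `(1+θ)·∫ z dμ_F̂` keep that term finite, so
the arithmetic can be done in `ℝ`. -/

theorem eqOn_of_ae_restrict_eq {X Y : Type*} [TopologicalSpace X] [MeasurableSpace X]
    [TopologicalSpace Y] [T2Space Y] {μ : Measure X} {U : Set X} (hU : IsOpen U)
    (hpos : ∀ V, IsOpen V → V ⊆ U → V.Nonempty → 0 < μ V) {f g : X → Y}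
    (hf : ContinuousOn f U) (hg : ContinuousOn g U) (h : f =ᵐ[μ.restrict U] g) :
    EqOn f g U := by
  set V := U ∩ (fun x => (f x, g x)) ⁻¹' (diagonal Y)ᶜ
  have hV : IsOpen V := (hf.prodMk hg).isOpen_inter_preimage hU isClosed_diagonal.isOpen_compl
  have hV0 : μ V = 0 := by
    refine le_antisymm ?_ zero_le
    calc μ V = μ ({x | f x ≠ g x} ∩ U) := by rw [inter_comm]; rfl
      _ ≤ μ.restrict U {x | f x ≠ g x} := Measure.le_restrict_apply _ _
      _ = 0 := h
  intro x hx
  by_contra hne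
  exact (hpos V hV inter_subset_left ⟨x, hx, hne⟩).ne' hV0

theorem lintegral_ofReal_add_eq_two_mul_add {α : Type*} [MeasurableSpace α] {μ : Measure α}
    {p q r s : α → ℝ} (hp : AEMeasurable p μ) (hr : AEMeasurable r μ) (hp0 : 0 ≤ᵐ[μ] p)
    (hq0 : 0 ≤ᵐ[μ] q) (hr0 : 0 ≤ᵐ[μ] r) (hs0 : 0 ≤ᵐ[μ] s)
    (h : ∀ᵐ x ∂μ, p x + q x = 2 * r x + s x) :
    ∫⁻ x, ENNReal.ofReal (p x) ∂μ + ∫⁻ x, ENNReal.ofReal (q x) ∂μ =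
      2 * ∫⁻ x, ENNReal.ofReal (r x) ∂μ + ∫⁻ x, ENNReal.ofReal (s x) ∂μ := by
  rw [← lintegral_add_left' hp.ennreal_ofReal, ← lintegral_const_mul' 2 _ ENNReal.ofNat_ne_top,
    ← lintegral_add_left' (hr.ennreal_ofReal.const_mul 2)]
  refine lintegral_congr_ae ?_
  filter_upwards [hp0, hq0, hr0, hs0, h] with x hpx hqx hrx hsx hx
  rw [← ENNReal.ofReal_add hpx hqx, hx, ENNReal.ofReal_add (mul_nonneg zero_le_two hrx) hsx,
    ENNReal.ofReal_mul zero_le_two, ENNReal.ofReal_ofNat]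

theorem ae_eq_of_lintegral_ofReal_mul_sq_sub_eq_zero {α : Type*} [MeasurableSpace α]
    {μ : Measure α} {f g : α → ℝ} {c : ℝ} (hc : 0 < c) (hf : AEMeasurable f μ)
    (hg : AEMeasurable g μ) (h : ∫⁻ x, ENNReal.ofReal (c * (f x - g x) ^ 2) ∂μ = 0) :
    f =ᵐ[μ] g := by
  filter_upwards [(lintegral_eq_zero_iff' (by fun_prop)).1 h] with x hx
  have hle : c * (f x - g x) ^ 2 ≤ 0 := ENNReal.ofReal_eq_zero.1 hx
  have hsq : (f x - g x) ^ 2 ≤ 0 := not_lt.1 fun hpos => (mul_pos hc hpos).not_ge hle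
  exact sub_eq_zero.1 (pow_eq_zero_iff two_ne_zero |>.1 (le_antisymm hsq (sq_nonneg _)))

theorem eq_zero_of_coe_sub_le_midpoint {A₁ A₂ Am D B₁ B₂ Bm : ℝ≥0∞} (hA₁ : A₁ ≠ ∞)
    (hA₂ : A₂ ≠ ∞) (hB₁ : B₁ ≠ ∞) (hB₂ : B₂ ≠ ∞) (hBm : Bm ≠ ∞)
    (hA : A₁ + A₂ = 2 * Am + D) (hB : B₁ + B₂ = 2 * Bm)
    (h₁ : (A₁ : EReal) - B₁ ≤ Am - Bm) (h₂ : (A₂ : EReal) - B₂ ≤ Am - Bm) : D = 0 := by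
  have hsum : 2 * Am + D ≠ ∞ := hA ▸ ENNReal.add_ne_top.2 ⟨hA₁, hA₂⟩
  have hAm : Am ≠ ∞ :=
    (ENNReal.lt_top_of_mul_ne_top_right (ENNReal.add_ne_top.1 hsum).1 two_ne_zero).ne
  have hD : D ≠ ∞ := (ENNReal.add_ne_top.1 hsum).2
  lift A₁ to NNReal using hA₁
  lift A₂ to NNReal using hA₂
  lift Am to NNReal using hAm
  lift D to NNReal using hD
  lift B₁ to NNReal using hB₁
  lift B₂ to NNReal using hB₂
  lift Bm to NNReal using hBm
  simp only [EReal.coe_nnreal_eq_coe_real, ← EReal.coe_sub, EReal.coe_le_coe_iff] at h₁ h₂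
  norm_cast at hA hB ⊢
  have hA' := congrArg NNReal.toReal hA
  have hB' := congrArg NNReal.toReal hB
  push_cast at hA' hB'
  have := D.coe_nonneg
  exact NNReal.coe_eq_zero.1 (by linarith)

namespace Adm

variable {H H₁ H₂ : ℝ → ℝ}

theorem zero_mem : (fun _ : ℝ => (0 : ℝ)) ∈ Adm :=
  ⟨rfl, fun _ _ => le_rfl, monotoneOn_const, (LipschitzWith.const' 0).lipschitzOnWith⟩

theorem continuousOn (hH : H ∈ Adm) : ContinuousOn H (Ici 0) :=
  hH.2.2.2.continuousOn

theorem ae_nonneg (hH : H ∈ Adm) (μ : Measure ℝ) : ∀ᵐ z ∂μ.restrict (Ioi 0), 0 ≤ H z :=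
  ae_restrict_of_forall_mem measurableSet_Ioi fun z hz => hH.2.1 z (le_of_lt hz)

theorem aemeasurable (hH : H ∈ Adm) (μ : Measure ℝ) : AEMeasurable H (μ.restrict (Ioi 0)) :=
  ((continuousOn hH).mono Ioi_subset_Ici_self).aemeasurable measurableSet_Ioi

theorem le_self (hH : H ∈ Adm) {z : ℝ} (hz : 0 ≤ z) : H z ≤ z := by
  have h := hH.2.2.2.dist_le_mul z hz 0 self_mem_Ici
  simp only [hH.1, Real.dist_eq, sub_zero, NNReal.coe_one, one_mul, abs_of_nonneg hz] at h
  exact (le_abs_self _).trans h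

theorem midpoint_mem (h₁ : H₁ ∈ Adm) (h₂ : H₂ ∈ Adm) : (fun z => (H₁ z + H₂ z) / 2) ∈ Adm := by
  obtain ⟨h₁0, h₁nn, h₁mono, h₁lip⟩ := h₁
  obtain ⟨h₂0, h₂nn, h₂mono, h₂lip⟩ := h₂
  refine ⟨by simp [h₁0, h₂0], fun z hz => by linarith [h₁nn z hz, h₂nn z hz],
    fun x hx y hy hxy => by linarith [h₁mono hx hy hxy, h₂mono hx hy hxy],
    LipschitzOnWith.of_dist_le_mul fun x hx y hy => ?_⟩
  have d₁ := abs_le.1 (h₁lip.dist_le_mul x hx y hy)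
  have d₂ := abs_le.1 (h₂lip.dist_le_mul x hx y hy)
  simp only [Real.dist_eq, NNReal.coe_one, one_mul] at d₁ d₂ ⊢
  exact abs_le.2 ⟨by linarith, by linarith⟩

end Adm

section Minimizers

variable {μF μG : Measure ℝ} {θ a : ℝ} {H H₁ H₂ : ℝ → ℝ}

theorem vfun_le_Jfun (hH : H ∈ Adm) : vfun μF μG θ a ≤ Jfun μF μG θ a H :=
  iInf₂_le H hH

theorem vfun_nonpos : vfun μF μG θ a ≤ 0 :=
  (vfun_le_Jfun Adm.zero_mem).trans (by simp [Jfun])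

theorem lintegral_premium_ne_top
    (hfin : ENNReal.ofReal (1 + θ) * (∫⁻ z in Ioi (0:ℝ), ENNReal.ofReal z ∂μG) < ⊤)
    (hH : H ∈ Adm) : ENNReal.ofReal (1 + θ) * ∫⁻ z in Ioi (0:ℝ), ENNReal.ofReal (H z) ∂μG ≠ ⊤ :=
  (lt_of_le_of_lt (mul_le_mul_right (setLIntegral_mono' measurableSet_Ioi fun _ hz =>
    ENNReal.ofReal_le_ofReal (Adm.le_self hH (le_of_lt hz))) _) hfin).ne

theorem lintegral_loss_ne_top_of_Jfun_eq_vfun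
    (hfin : ENNReal.ofReal (1 + θ) * (∫⁻ z in Ioi (0:ℝ), ENNReal.ofReal z ∂μG) < ⊤)
    (hH : H ∈ Adm) (hJ : Jfun μF μG θ a H = vfun μF μG θ a) :
    ∫⁻ z in Ioi (0:ℝ), ENNReal.ofReal (a / 2 * H z ^ 2 + H z) ∂μF ≠ ⊤ := by
  intro htop
  have hJtop : Jfun μF μG θ a H = ⊤ := by
    lift ENNReal.ofReal (1 + θ) * ∫⁻ z in Ioi (0:ℝ), ENNReal.ofReal (H z) ∂μG to NNReal
      using lintegral_premium_ne_top hfin hH with P hP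
    rw [Jfun, htop, ← hP, EReal.coe_ennreal_top, EReal.coe_nnreal_eq_coe_real, EReal.top_sub_coe]
  exact absurd (hJtop ▸ hJ ▸ vfun_nonpos) (by simp)

theorem lintegral_sq_sub_eq_zero_of_Jfun_eq_vfun
    (hfin : ENNReal.ofReal (1 + θ) * (∫⁻ z in Ioi (0:ℝ), ENNReal.ofReal z ∂μG) < ⊤)
    (ha : 0 ≤ a) (hH₁ : H₁ ∈ Adm) (hH₂ : H₂ ∈ Adm)
    (hJ₁ : Jfun μF μG θ a H₁ = vfun μF μG θ a) (hJ₂ : Jfun μF μG θ a H₂ = vfun μF μG θ a) :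
    ∫⁻ z in Ioi (0:ℝ), ENNReal.ofReal (a / 4 * (H₁ z - H₂ z) ^ 2) ∂μF = 0 := by
  have hM := Adm.midpoint_mem hH₁ hH₂
  have m₁ := Adm.aemeasurable hH₁ μF
  have m₂ := Adm.aemeasurable hH₂ μF
  refine eq_zero_of_coe_sub_le_midpoint (lintegral_loss_ne_top_of_Jfun_eq_vfun hfin hH₁ hJ₁)
    (lintegral_loss_ne_top_of_Jfun_eq_vfun hfin hH₂ hJ₂) (lintegral_premium_ne_top hfin hH₁)
    (lintegral_premium_ne_top hfin hH₂) (lintegral_premium_ne_top hfin hM) ?_ ?_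
    (hJ₁.le.trans (vfun_le_Jfun hM)) (hJ₂.le.trans (vfun_le_Jfun hM))
  · refine lintegral_ofReal_add_eq_two_mul_add (by fun_prop) (by fun_prop) ?_ ?_ ?_ ?_ ?_
    all_goals filter_upwards [Adm.ae_nonneg hH₁ μF, Adm.ae_nonneg hH₂ μF] with z h₁ h₂
    all_goals first | positivity | ring
  · rw [← mul_add, mul_left_comm]
    congr 1
    have n₁ := Adm.aemeasurable hH₁ μG
    have n₂ := Adm.aemeasurable hH₂ μG
    refine (lintegral_ofReal_add_eq_two_mul_add (r := fun z => (H₁ z + H₂ z) / 2)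
      (s := fun _ => 0) n₁ (by fun_prop) (Adm.ae_nonneg hH₁ μG) (Adm.ae_nonneg hH₂ μG) ?_
      (ae_of_all _ fun _ => le_rfl) ?_).trans ?_
    · filter_upwards [Adm.ae_nonneg hH₁ μG, Adm.ae_nonneg hH₂ μG] with z h₁ h₂
      positivity
    · exact ae_of_all _ fun z => by ring
    · simp

end Minimizers

theorem stmt_8_general
    (F Fhat : StieltjesFunction ℝ) (θ : ℝ)
    (hfin : ENNReal.ofReal (1 + θ) *
        (∫⁻ z in Set.Ioi (0:ℝ), ENNReal.ofReal z ∂Fhat.measure) < ⊤)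
    (hsupp : ∀ U : Set ℝ, IsOpen U → (U ∩ Set.Ici 0).Nonempty → 0 < F.measure U) :
    ∀ a ∈ Set.Ioi (0:ℝ), ∀ H₁ ∈ Adm, ∀ H₂ ∈ Adm,
      Jfun F.measure Fhat.measure θ a H₁ = vfun F.measure Fhat.measure θ a →
      Jfun F.measure Fhat.measure θ a H₂ = vfun F.measure Fhat.measure θ a →
      ∀ z : ℝ, 0 ≤ z → H₁ z = H₂ z := by
  intro a ha H₁ hH₁ H₂ hH₂ hJ₁ hJ₂ z hz
  have hae : H₁ =ᵐ[F.measure.restrict (Ioi 0)] H₂ :=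
    ae_eq_of_lintegral_ofReal_mul_sq_sub_eq_zero (div_pos ha four_pos)
      (Adm.aemeasurable hH₁ _) (Adm.aemeasurable hH₂ _)
      (lintegral_sq_sub_eq_zero_of_Jfun_eq_vfun hfin (le_of_lt ha) hH₁ hH₂ hJ₁ hJ₂)
  rcases hz.eq_or_lt with rfl | hz
  · rw [hH₁.1, hH₂.1]
  · refine eqOn_of_ae_restrict_eq isOpen_Ioi
      (fun V hV hVU hne => hsupp V hV (hne.mono fun x hx => ⟨hx, (hVU hx).le⟩))
      ((Adm.continuousOn hH₁).mono Ioi_subset_Ici_self)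
      ((Adm.continuousOn hH₂).mono Ioi_subset_Ici_self) hae hz

/-- if the topological support of μ_F is [0,∞), the minimizer of J_a
over 𝒜 is unique (as a function on [0,∞)). -/
theorem stmt_8
    (F Fhat : StieltjesFunction ℝ) (g : ℝ → ℝ) (θ0 θ : ℝ)
    (hF_neg : ∀ z : ℝ, z < 0 → F z = 0)
    (hF_top : Tendsto (fun z => F z) atTop (nhds 1))
    (hg_mono : MonotoneOn g (Set.Icc 0 1))
    (hg_left : ∀ p ∈ Set.Ioc (0:ℝ) 1, Tendsto g (nhdsWithin p (Set.Iio p)) (nhds (g p)))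
    (hg_zero : g 0 = 0)
    (hg_zero' : Tendsto g (nhdsWithin 0 (Set.Ioi 0)) (nhds 0))
    (hg_one : g 1 = 1)
    (hg_pos : 0 < g (1 - F 0))
    (hθ0 : -1 < θ0)
    (hθ : θ = (1 + θ0) * g (1 - F 0) - 1)
    (hFhat : ∀ z : ℝ, Fhat z = if z < 0 then 0 else 1 - g (1 - F z) / g (1 - F 0))
    (hFhat_top : Tendsto (fun z => Fhat z) atTop (nhds 1))
    (hfin : ENNReal.ofReal (1 + θ) *
        (∫⁻ z in Set.Ioi (0:ℝ), ENNReal.ofReal z ∂Fhat.measure) < ⊤)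
    (hsupp : ∀ U : Set ℝ, IsOpen U → (U ∩ Set.Ici 0).Nonempty → 0 < F.measure U) :
    ∀ a ∈ Set.Ioi (0:ℝ), ∀ H₁ ∈ Adm, ∀ H₂ ∈ Adm,
      Jfun F.measure Fhat.measure θ a H₁ = vfun F.measure Fhat.measure θ a →
      Jfun F.measure Fhat.measure θ a H₂ = vfun F.measure Fhat.measure θ a →
      ∀ z : ℝ, 0 ≤ z → H₁ z = H₂ z :=
  stmt_8_general F Fhat θ hfin hsupp
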